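/- Let G be a connected graph of order n, minimum degree δ ≥ 3 and power domination number γ_p = 2. Then rad_p(G) ≤ n - δ - 2. -/
import Mathlib


open scoped Classical

/-- The closed neighbourhood `N[S]` of a finset of vertices. -/
noncomputable def closedNbhd {V : Type*} [Fintype V] (G : SimpleGraph V) (S : Finset V) :
    Finset V :=
  S ∪ S.biUnion fun v => G.neighborFinset v

/-- One propagation step of power domination. -/
noncomputable def pdStep {V : Type*} [Fintype V] (G : SimpleGraph V) (A : Finset V) : Finset V :=
  A ∪ closedNbhd G (A.filter fun v => (G.neighborFinset v \ A).card ≤ 1)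

/-- The monitored sets `P^i(S)`, with `P^0(S) = ∅` and `P^1(S) = N[S]`. -/
noncomputable def pdSeq {V : Type*} [Fintype V] (G : SimpleGraph V) (S : Finset V) : ℕ → Finset V
  | 0 => ∅
  | 1 => closedNbhd G S
  | (i + 2) => pdStep G (pdSeq G S (i + 1))

/-- `S` is a power dominating set of `G`. -/
def IsPDS {V : Type*} [Fintype V] (G : SimpleGraph V) (S : Finset V) : Prop :=
  ∃ i, pdSeq G S i = Finset.univ

/-- The power domination number `γ_p(G)`. -/
noncomputable def pdNum {V : Type*} [Fintype V] (G : SimpleGraph V) : ℕ :=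
  sInf {k | ∃ S : Finset V, IsPDS G S ∧ S.card = k}

/-- The propagation radius `rad_p(G, S)` of a PDS `S`. -/
noncomputable def pdRadS {V : Type*} [Fintype V] (G : SimpleGraph V) (S : Finset V) : ℕ :=
  sInf {i | pdSeq G S i = Finset.univ}

/-- The propagation radius `rad_p(G)`. -/
noncomputable def pdRad {V : Type*} [Fintype V] (G : SimpleGraph V) : ℕ :=
  sInf {r | ∃ S : Finset V, IsPDS G S ∧ S.card = pdNum G ∧ pdRadS G S = r}

section Aux

variable {V : Type*} [Fintype V] (G : SimpleGraph V)

lemma subset_closedNbhd (S : Finset V) : S ⊆ closedNbhd G S :=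
  Finset.subset_union_left

lemma subset_pdStep (A : Finset V) : A ⊆ pdStep G A :=
  Finset.subset_union_left

lemma closedNbhd_mono {A B : Finset V} (h : A ⊆ B) : closedNbhd G A ⊆ closedNbhd G B := by
  unfold closedNbhd
  exact Finset.union_subset_union h (Finset.biUnion_subset_biUnion_of_subset_left _ h)

lemma pdStep_mono {A B : Finset V} (h : A ⊆ B) : pdStep G A ⊆ pdStep G B := by
  unfold pdStep
  refine Finset.union_subset_union h (closedNbhd_mono G ?_)
  intro v hv
  rw [Finset.mem_filter] at hv ⊢
  refine ⟨h hv.1, le_trans (Finset.card_le_card ?_) hv.2⟩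
  exact Finset.sdiff_subset_sdiff le_rfl h

lemma pdSeq_one (S : Finset V) : pdSeq G S 1 = closedNbhd G S := rfl

lemma pdSeq_succ_eq {S : Finset V} {i : ℕ} (hi : 1 ≤ i) :
    pdSeq G S (i + 1) = pdStep G (pdSeq G S i) := by
  cases i with
  | zero => omega
  | succ j => rfl

lemma pdSeq_mono_succ (S : Finset V) (i : ℕ) : pdSeq G S i ⊆ pdSeq G S (i + 1) := by
  cases i with
  | zero => exact Finset.empty_subset _
  | succ j =>
    rw [pdSeq_succ_eq G (Nat.succ_le_succ (Nat.zero_le j))]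
    exact subset_pdStep G _

lemma pdSeq_le_shift {S S' : Finset V} {k : ℕ}
    (h : pdSeq G S 1 ⊆ pdSeq G S' (k + 1)) :
    ∀ i, pdSeq G S (i + 1) ⊆ pdSeq G S' (i + k + 1) := by
  intro i
  induction i with
  | zero => simpa using h
  | succ j ih =>
    rw [show j + 1 + 1 = (j + 1) + 1 from rfl,
      pdSeq_succ_eq G (Nat.succ_le_succ (Nat.zero_le j)),
      show j + 1 + k + 1 = (j + k + 1) + 1 by omega,
      pdSeq_succ_eq G (by omega : 1 ≤ j + k + 1)]
    exact pdStep_mono G ih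

lemma isPDS_of_compare [Nonempty V] {S S' : Finset V} {k : ℕ} (hS : IsPDS G S)
    (h : pdSeq G S 1 ⊆ pdSeq G S' (k + 1)) : IsPDS G S' := by
  obtain ⟨i, hi⟩ := hS
  cases i with
  | zero =>
    exfalso
    have : (∅ : Finset V) = Finset.univ := hi
    exact Finset.univ_nonempty.ne_empty this.symm
  | succ j =>
    refine ⟨j + k + 1, Finset.univ_subset_iff.mp ?_⟩
    calc (Finset.univ : Finset V) = pdSeq G S (j + 1) := hi.symm
    _ ⊆ pdSeq G S' (j + k + 1) := pdSeq_le_shift G h j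

lemma pdSeq_stall {S : Finset V} {j : ℕ} (hj : 1 ≤ j)
    (h : pdStep G (pdSeq G S j) = pdSeq G S j) :
    ∀ m, j ≤ m → pdSeq G S m = pdSeq G S j := by
  intro m
  induction m with
  | zero => intro h0; omega
  | succ k ih =>
    intro hk
    rcases Nat.lt_or_ge j (k + 1) with hlt | hge
    · have hk' : j ≤ k := by omega
      rw [pdSeq_succ_eq G (le_trans hj hk'), ih hk', h]
    · have : j = k + 1 := by omega
      rw [this]

lemma pdRadS_le_card [Nonempty V] {S : Finset V} (hS : IsPDS G S) :
    pdRadS G S + (pdSeq G S 1).card ≤ Fintype.card V + 1 := by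
  have htmem : pdSeq G S (pdRadS G S) = Finset.univ := Nat.sInf_mem hS
  set t := pdRadS G S with ht
  have ht1 : 1 ≤ t := by
    rcases Nat.eq_zero_or_pos t with h0 | h
    · exfalso
      rw [h0] at htmem
      exact Finset.univ_nonempty.ne_empty (htmem : (∅ : Finset V) = Finset.univ).symm
    · exact h
  have grow : ∀ i, 1 ≤ i → i ≤ t → (pdSeq G S 1).card + i ≤ (pdSeq G S i).card + 1 := by
    intro i
    induction i with
    | zero => omega
    | succ j ih =>
      intro _ hle
      rcases Nat.eq_zero_or_pos j with h0 | hj1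
      · subst h0; simp
      · have hjt : j ≤ t := by omega
        have hIH := ih hj1 hjt
        have hsub : pdSeq G S j ⊆ pdSeq G S (j + 1) := pdSeq_mono_succ G S j
        have hne : pdSeq G S j ≠ pdSeq G S (j + 1) := by
          intro heq
          have hstep : pdStep G (pdSeq G S j) = pdSeq G S j := by
            rw [← pdSeq_succ_eq G hj1]; exact heq.symm
          have hst := pdSeq_stall G hj1 hstep t (by omega)
          have hjnot : pdSeq G S j ≠ Finset.univ := by
            intro hju
            exact Nat.notMem_of_lt_sInf (show j < t by omega) (hju : j ∈ {i | pdSeq G S i = Finset.univ})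
          rw [htmem] at hst
          exact hjnot hst.symm
        have hlt : (pdSeq G S j).card < (pdSeq G S (j + 1)).card :=
          Finset.card_lt_card (lt_of_le_of_ne hsub hne)
        omega
  have := grow t ht1 le_rfl
  rw [htmem, Finset.card_univ] at this
  omega

lemma closedNbhd_pair (a b : V) :
    closedNbhd G {a, b} =
      insert a (G.neighborFinset a) ∪ insert b (G.neighborFinset b) := by
  ext x
  simp only [closedNbhd, Finset.mem_union, Finset.mem_biUnion, Finset.mem_insert,
    Finset.mem_singleton, SimpleGraph.mem_neighborFinset]
  constructor
  · rintro (h | ⟨z, (rfl | rfl), hz⟩)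
    · rcases h with rfl | rfl
      · exact Or.inl (Or.inl rfl)
      · exact Or.inr (Or.inl rfl)
    · exact Or.inl (Or.inr hz)
    · exact Or.inr (Or.inr hz)
  · rintro ((rfl | h) | (rfl | h))
    · exact Or.inl (Or.inl rfl)
    · exact Or.inr ⟨a, Or.inl rfl, h⟩
    · exact Or.inl (Or.inr rfl)
    · exact Or.inr ⟨b, Or.inr rfl, h⟩

lemma closedNbhd_singleton (a : V) :
    closedNbhd G {a} = insert a (G.neighborFinset a) := by
  ext x
  simp only [closedNbhd, Finset.mem_union, Finset.mem_biUnion, Finset.mem_insert,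
    Finset.mem_singleton, SimpleGraph.mem_neighborFinset]
  constructor
  · rintro (rfl | ⟨z, rfl, hz⟩)
    · exact Or.inl rfl
    · exact Or.inr hz
  · rintro (rfl | h)
    · exact Or.inl rfl
    · exact Or.inr ⟨a, rfl, h⟩

lemma final_bound [Nonempty V] {S : Finset V} (hS : IsPDS G S)
    (hcard : S.card = pdNum G)
    (hc : G.minDegree + 3 ≤ (pdSeq G S 1).card) :
    pdRad G ≤ Fintype.card V - G.minDegree - 2 := by
  have h1 := pdRadS_le_card G hS
  have h2 : pdRad G ≤ pdRadS G S := Nat.sInf_le ⟨S, hS, hcard, rfl⟩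
  have h3 : (pdSeq G S 1).card ≤ Fintype.card V := Finset.card_le_univ _
  omega

end Aux

theorem stmt_11 {V : Type*} [Fintype V] (G : SimpleGraph V) (n : ℕ)
    (hn : Fintype.card V = n) (hconn : G.Connected)
    (hdelta : 3 ≤ G.minDegree) (hgamma : pdNum G = 2) :
    pdRad G ≤ n - G.minDegree - 2 := by
  have hne : Nonempty V := hconn.nonempty
  subst hn
  -- there is a PDS of cardinality 2
  have hPne : {k | ∃ S : Finset V, IsPDS G S ∧ S.card = k}.Nonempty := by
    refine ⟨_, ⟨Finset.univ, ⟨1, ?_⟩, rfl⟩⟩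
    exact Finset.univ_subset_iff.mp (subset_closedNbhd G Finset.univ)
  have h2 : ∃ S : Finset V, IsPDS G S ∧ S.card = 2 := by
    have := Nat.sInf_mem hPne
    rw [show sInf {k | ∃ S : Finset V, IsPDS G S ∧ S.card = k} = pdNum G from rfl, hgamma] at this
    exact this
  have No1 : ∀ T : Finset V, IsPDS G T → T.card ≠ 1 := by
    intro T hT h1
    have : pdNum G ≤ 1 := Nat.sInf_le ⟨T, hT, h1⟩
    omega
  obtain ⟨S₀, hS₀, hScard⟩ := h2
  obtain ⟨u, v, huv, rfl⟩ := Finset.card_eq_two.mp hScard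
  set W := G.neighborFinset u with hW
  set A := insert u W with hA
  have hWu : u ∉ W := by
    rw [hW]; exact G.notMem_neighborFinset_self u
  have hWcard : W.card = G.degree u := rfl
  have hAcard : A.card = G.degree u + 1 := by
    rw [hA, Finset.card_insert_of_notMem hWu, hWcard]
  have hdegu : G.minDegree ≤ G.degree u := G.minDegree_le_degree u
  have hCuv : closedNbhd G {u, v} = A ∪ insert v (G.neighborFinset v) :=
    closedNbhd_pair G u v
  by_cases hm : G.minDegree + 3 ≤ (closedNbhd G {u, v}).card
  · exact final_bound G hS₀ (by rw [hScard, hgamma]) (by rw [pdSeq_one]; exact hm)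
  push_neg at hm
  by_cases hv : v ∈ A
  · -- v in N[u] : {u} is a PDS, contradiction
    exfalso
    have hNvsub : insert v (G.neighborFinset v) ⊆ closedNbhd G {u, v} := by
      rw [hCuv]; exact Finset.subset_union_right
    have hEle : (G.neighborFinset v \ A).card ≤ 1 := by
      have hsub : G.neighborFinset v \ A ⊆ closedNbhd G {u, v} \ A := by
        refine Finset.sdiff_subset_sdiff ?_ le_rfl
        exact fun x hx => hNvsub (Finset.mem_insert_of_mem hx)
      have hAsub : A ⊆ closedNbhd G {u, v} := by
        rw [hCuv]; exact Finset.subset_union_left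
      have h1 : (closedNbhd G {u, v} \ A).card = (closedNbhd G {u, v}).card - A.card :=
        Finset.card_sdiff_of_subset hAsub
      have h2 := Finset.card_le_card hsub
      omega
    have hPDSu : IsPDS G {u} := by
      refine isPDS_of_compare G (k := 1) hS₀ ?_
      rw [pdSeq_one, hCuv]
      have h2eq : pdSeq G {u} 2 = pdStep G A := by
        rw [pdSeq_succ_eq G le_rfl, pdSeq_one, closedNbhd_singleton]
      rw [h2eq]
      intro x hx
      rcases Finset.mem_union.mp hx with hxA | hxB
      · exact subset_pdStep G A hxA
      · have hvf : v ∈ A.filter fun z => (G.neighborFinset z \ A).card ≤ 1 :=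
          Finset.mem_filter.mpr ⟨hv, hEle⟩
        apply Finset.mem_union_right
        rcases Finset.mem_insert.mp hxB with rfl | hxN
        · exact subset_closedNbhd G _ hvf
        · exact Finset.mem_union_right _ (Finset.mem_biUnion.mpr ⟨v, hvf, hxN⟩)
    exact No1 {u} hPDSu (Finset.card_singleton u)
  · -- v not in N[u] : twin structure
    have hnadj : ¬ G.Adj u v := by
      intro h
      exact hv (Finset.mem_insert_of_mem ((SimpleGraph.mem_neighborFinset G u v).mpr h))
    have hvne : v ≠ u := fun h => hv (h ▸ Finset.mem_insert_self u W)
    have hunv : u ∉ G.neighborFinset v := by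
      rw [SimpleGraph.mem_neighborFinset]
      exact fun h => hnadj h.symm
    have hsub1 : insert v A ⊆ closedNbhd G {u, v} := by
      rw [hCuv]
      intro x hx
      rcases Finset.mem_insert.mp hx with rfl | hxA
      · exact Finset.mem_union_right _ (Finset.mem_insert_self _ _)
      · exact Finset.mem_union_left _ hxA
    have hc1 : (insert v A).card = G.degree u + 2 := by
      rw [Finset.card_insert_of_notMem hv, hAcard]
    have hPeq : closedNbhd G {u, v} = insert v A := by
      have := Finset.card_le_card hsub1
      exact (Finset.eq_of_subset_of_card_le hsub1 (by omega)).symm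
    have hdegu_eq : G.degree u = G.minDegree := by
      have := Finset.card_le_card hsub1
      omega
    have hNvW : G.neighborFinset v = W := by
      have hsub : G.neighborFinset v ⊆ W := by
        intro x hx
        have hx1 : x ∈ insert v A := by
          rw [← hPeq, hCuv]
          exact Finset.mem_union_right _ (Finset.mem_insert_of_mem hx)
        have hadjvx : G.Adj v x := (SimpleGraph.mem_neighborFinset G v x).mp hx
        rcases Finset.mem_insert.mp hx1 with rfl | hx2
        · exact absurd hadjvx (G.irrefl)
        · rcases Finset.mem_insert.mp hx2 with rfl | hx3
          · exact absurd hx hunv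
          · exact hx3
      refine Finset.eq_of_subset_of_card_le hsub ?_
      have hdegv : G.minDegree ≤ G.degree v := G.minDegree_le_degree v
      have : (G.neighborFinset v).card = G.degree v := rfl
      omega
    set P := insert v A with hPdef
    have hPcard : P.card = G.minDegree + 2 := by rw [hPdef, hc1, hdegu_eq]
    have hseq1 : pdSeq G ({u, v} : Finset V) 1 = P := by rw [pdSeq_one, hPeq]
    have hWsubP : W ⊆ P := fun x hx =>
      Finset.mem_insert_of_mem (Finset.mem_insert_of_mem hx)
    -- propagation from P must be nontrivial
    have hstep_ne : pdStep G P ≠ P := by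
      intro heq
      have hPuniv : P = Finset.univ := by
        obtain ⟨i, hi⟩ := hS₀
        cases i with
        | zero =>
          exact absurd (hi : (∅ : Finset V) = Finset.univ).symm
            Finset.univ_nonempty.ne_empty
        | succ j =>
          have hstall := pdSeq_stall G (S := ({u, v} : Finset V)) (j := 1) le_rfl
            (by rw [hseq1]; exact heq)
          have := hstall (j + 1) (by omega)
          rw [hi, hseq1] at this
          exact this.symm
      -- then {u} is a PDS
      obtain ⟨w, hw⟩ : W.Nonempty := Finset.card_pos.mp (by rw [hWcard]; omega)
      have hadjwv : G.Adj w v := by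
        have : w ∈ G.neighborFinset v := by rw [hNvW]; exact hw
        exact ((SimpleGraph.mem_neighborFinset G v w).mp this).symm
      have hwf : w ∈ A.filter fun z => (G.neighborFinset z \ A).card ≤ 1 := by
        refine Finset.mem_filter.mpr ⟨Finset.mem_insert_of_mem hw, ?_⟩
        have hsubv : G.neighborFinset w \ A ⊆ {v} := by
          intro x hx
          have hx1 : x ∈ P := hPuniv ▸ Finset.mem_univ x
          have hx2 := (Finset.mem_sdiff.mp hx).2
          rcases Finset.mem_insert.mp hx1 with rfl | hxA
          · exact Finset.mem_singleton_self _
          · exact absurd hxA hx2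
        calc (G.neighborFinset w \ A).card ≤ ({v} : Finset V).card :=
              Finset.card_le_card hsubv
        _ = 1 := Finset.card_singleton v
      have hvmem : v ∈ pdStep G A := by
        apply Finset.mem_union_right
        apply Finset.mem_union_right
        exact Finset.mem_biUnion.mpr
          ⟨w, hwf, (SimpleGraph.mem_neighborFinset G w v).mpr hadjwv⟩
      have hPDSu : IsPDS G {u} := by
        refine ⟨2, Finset.univ_subset_iff.mp ?_⟩
        have h2eq : pdSeq G {u} 2 = pdStep G A := by
          rw [pdSeq_succ_eq G le_rfl, pdSeq_one, closedNbhd_singleton]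
        rw [h2eq, ← hPuniv]
        intro x hx
        rcases Finset.mem_insert.mp hx with rfl | hxA
        · exact hvmem
        · exact subset_pdStep G A hxA
      exact No1 {u} hPDSu (Finset.card_singleton u)
    obtain ⟨x, hx1, hx2⟩ := Finset.exists_of_ssubset
      (lt_of_le_of_ne (subset_pdStep G P) (fun h => hstep_ne h.symm))
    have hzex : ∃ z, z ∈ P ∧ (G.neighborFinset z \ P).card ≤ 1 ∧ G.Adj z x := by
      rcases Finset.mem_union.mp hx1 with h | h
      · exact absurd h hx2
      · rcases Finset.mem_union.mp h with h | h
        · exact absurd (Finset.mem_filter.mp h).1 hx2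
        · obtain ⟨z, hzF, hzx⟩ := Finset.mem_biUnion.mp h
          obtain ⟨hzP, hz1⟩ := Finset.mem_filter.mp hzF
          exact ⟨z, hzP, hz1, (SimpleGraph.mem_neighborFinset G z x).mp hzx⟩
    obtain ⟨z, hzP, hz1, hzx⟩ := hzex
    have hzW : z ∈ W := by
      rcases Finset.mem_insert.mp hzP with rfl | hz
      · exfalso
        apply hx2
        have : x ∈ W := by
          rw [← hNvW]
          exact (SimpleGraph.mem_neighborFinset G z x).mpr hzx
        exact hWsubP this
      · rcases Finset.mem_insert.mp hz with rfl | hz'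
        · exfalso
          apply hx2
          have : x ∈ W := by
            rw [hW]
            exact (SimpleGraph.mem_neighborFinset G z x).mpr hzx
          exact hWsubP this
        · exact hz'
    have hadj_uz : G.Adj u z := (SimpleGraph.mem_neighborFinset G u z).mp hzW
    have hne_uz : u ≠ z := G.ne_of_adj hadj_uz
    have hadj_zv : G.Adj z v := by
      have : z ∈ G.neighborFinset v := by rw [hNvW]; exact hzW
      exact ((SimpleGraph.mem_neighborFinset G v z).mp this).symm
    -- the new PDS {u, z}
    have hPsub : P ⊆ pdSeq G ({u, z} : Finset V) 1 := by
      rw [pdSeq_one, closedNbhd_pair]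
      intro y hy
      rcases Finset.mem_insert.mp hy with rfl | hyA
      · exact Finset.mem_union_right _
          (Finset.mem_insert_of_mem ((SimpleGraph.mem_neighborFinset G z y).mpr hadj_zv))
      · exact Finset.mem_union_left _ hyA
    have hxS' : x ∈ pdSeq G ({u, z} : Finset V) 1 := by
      rw [pdSeq_one, closedNbhd_pair]
      exact Finset.mem_union_right _
        (Finset.mem_insert_of_mem ((SimpleGraph.mem_neighborFinset G z x).mpr hzx))
    have hPDS' : IsPDS G ({u, z} : Finset V) := by
      refine isPDS_of_compare G (k := 0) hS₀ ?_
      rw [hseq1]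
      exact hPsub
    have hcard3 : G.minDegree + 3 ≤ (pdSeq G ({u, z} : Finset V) 1).card := by
      have hins : insert x P ⊆ pdSeq G ({u, z} : Finset V) 1 :=
        Finset.insert_subset hxS' hPsub
      have := Finset.card_le_card hins
      rw [Finset.card_insert_of_notMem hx2, hPcard] at this
      omega
    exact final_bound G hPDS' (by rw [Finset.card_pair hne_uz, hgamma]) hcard3
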